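/- arXiv:2405.15819 — 3 statements merged into one kernel-verified Lean document; each statement's English description precedes it below -/
import Mathlib

section
/- Assume A_m ≠ 0 and D_k ≠ 0, and set N = mn + kr. Then the set 𝕍 = {(𝕏, 𝕐) ∈ ℂ^{N×N} × ℂ^{N×N} : there exist v ∈ ℂ^m and w ∈ ℂ^k such that λ𝕏+𝕐 is in 𝕃₁(G) with ansatz vectors (v, w)} is a ℂ-linear subspace of ℂ^{N×N} × ℂ^{N×N} of dimension m + m(m−1)n² + k + k(k−1)r². -/
open Matrix Finset

noncomputable section

/-- `Λ_{p-1}(λ) = (λ^{p-1}, …, λ, 1)ᵀ` as a vector in `ℂ^p`. -/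
def Lam (p : ℕ) (lam : ℂ) : Fin p → ℂ := fun i => lam ^ (p - 1 - (i : ℕ))

/-- the standard basis vector of `ℂ^a` with a `1` in (0-indexed) position `j`. -/
def eVec (a j : ℕ) : Fin a → ℂ := fun i => if (i : ℕ) = j then 1 else 0

/-- evaluation at `lam` of the matrix polynomial with coefficients `Pc 0, …, Pc d`. -/
def polyEval {d n : ℕ} (Pc : Fin (d + 1) → Matrix (Fin n) (Fin n) ℂ) (lam : ℂ) :
    Matrix (Fin n) (Fin n) ℂ := ∑ j : Fin (d + 1), lam ^ (j : ℕ) • Pc j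

/-- Kronecker product `v ⊗ M` of a column vector `v ∈ ℂ^a` with a matrix `M`. -/
def vKron {a : ℕ} {α β : Type*} (v : Fin a → ℂ) (M : Matrix α β ℂ) :
    Matrix (Fin a × α) β ℂ := fun i j => v i.1 * M i.2 j

/-- Kronecker product `vᵀ ⊗ M` of a row vector with a matrix `M`. -/
def rKron {a : ℕ} {α β : Type*} (v : Fin a → ℂ) (M : Matrix α β ℂ) :
    Matrix α (Fin a × β) ℂ := fun i j => v j.1 * M i j.2

/-- Kronecker product `v wᵀ ⊗ M`. -/
def oKron {a b : ℕ} {α β : Type*} (v : Fin a → ℂ) (w : Fin b → ℂ) (M : Matrix α β ℂ) :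
    Matrix (Fin a × α) (Fin b × β) ℂ := fun i j => v i.1 * w j.1 * M i.2 j.2

/-- the pencil `λX + Y` is in `L₁(P)` with right ansatz vector `v`. -/
def InL1 {d n : ℕ} (Pc : Fin (d + 1) → Matrix (Fin n) (Fin n) ℂ)
    (X Y : Matrix (Fin d × Fin n) (Fin d × Fin n) ℂ) (v : Fin d → ℂ) : Prop :=
  ∀ lam : ℂ, (lam • X + Y) * vKron (Lam d lam) (1 : Matrix (Fin n) (Fin n) ℂ)
      = vKron v (polyEval Pc lam)

/-- the pencil `λX + Y` is in `L₂(P)` with left ansatz vector `s`. -/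
def InL2 {d n : ℕ} (Pc : Fin (d + 1) → Matrix (Fin n) (Fin n) ℂ)
    (X Y : Matrix (Fin d × Fin n) (Fin d × Fin n) ℂ) (s : Fin d → ℂ) : Prop :=
  ∀ lam : ℂ, rKron (Lam d lam) (1 : Matrix (Fin n) (Fin n) ℂ) * (lam • X + Y)
      = rKron s (polyEval Pc lam)

/-- the pencil `λ𝕏 + 𝕐` is in `𝕃₁(G)` with ansatz vectors `(v, w)`. -/
def InBL1 {m k n r : ℕ} (Ac : Fin (m + 1) → Matrix (Fin n) (Fin n) ℂ)
    (Dc : Fin (k + 1) → Matrix (Fin r) (Fin r) ℂ)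
    (B : Matrix (Fin n) (Fin r) ℂ) (C : Matrix (Fin r) (Fin n) ℂ)
    (XX YY : Matrix ((Fin m × Fin n) ⊕ (Fin k × Fin r)) ((Fin m × Fin n) ⊕ (Fin k × Fin r)) ℂ)
    (v : Fin m → ℂ) (w : Fin k → ℂ) : Prop :=
  ∃ (X Y : Matrix (Fin m × Fin n) (Fin m × Fin n) ℂ)
    (P Q : Matrix (Fin k × Fin r) (Fin k × Fin r) ℂ),
      InL1 Ac X Y v ∧ InL1 Dc P Q w ∧
      XX = Matrix.fromBlocks X 0 0 P ∧
      YY = Matrix.fromBlocks Y (-(oKron v (eVec k (k - 1)) B)) (oKron w (eVec m (m - 1)) C) Q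

/-- the pencil `λ𝕏 + 𝕐` is in `𝕃₂(G)` with ansatz vectors `(s, z)`. -/
def InBL2 {m k n r : ℕ} (Ac : Fin (m + 1) → Matrix (Fin n) (Fin n) ℂ)
    (Dc : Fin (k + 1) → Matrix (Fin r) (Fin r) ℂ)
    (B : Matrix (Fin n) (Fin r) ℂ) (C : Matrix (Fin r) (Fin n) ℂ)
    (XX YY : Matrix ((Fin m × Fin n) ⊕ (Fin k × Fin r)) ((Fin m × Fin n) ⊕ (Fin k × Fin r)) ℂ)
    (s : Fin m → ℂ) (z : Fin k → ℂ) : Prop :=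
  ∃ (X Y : Matrix (Fin m × Fin n) (Fin m × Fin n) ℂ)
    (P Q : Matrix (Fin k × Fin r) (Fin k × Fin r) ℂ),
      InL2 Ac X Y s ∧ InL2 Dc P Q z ∧
      XX = Matrix.fromBlocks X 0 0 P ∧
      YY = Matrix.fromBlocks Y (-(oKron (eVec m (m - 1)) z B)) (oKron (eVec k (k - 1)) s C) Q

/-- the transfer function `G(λ) = D(λ) + C A(λ)⁻¹ B`. -/
def Gmat {m k n r : ℕ} (Ac : Fin (m + 1) → Matrix (Fin n) (Fin n) ℂ)
    (Dc : Fin (k + 1) → Matrix (Fin r) (Fin r) ℂ)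
    (B : Matrix (Fin n) (Fin r) ℂ) (C : Matrix (Fin r) (Fin n) ℂ) (lam : ℂ) :
    Matrix (Fin r) (Fin r) ℂ :=
  polyEval Dc lam + C * (polyEval Ac lam)⁻¹ * B

/-! Write `X_j`, `Y_j` for the block columns of `X`, `Y`. Then
`(λX + Y)(Λ_{d-1}(λ) ⊗ I) = λ^d X_0 + Σ_j λ^{d-1-j} (Y_j + X_{j+1})` (with `X_d = 0`), so comparing
coefficients with `v ⊗ A(λ)` shows that `λX + Y ∈ L₁(A)` with ansatz vector `v` exactly when
`X_0 = v ⊗ A_d` and `Y_j = v ⊗ A_{d-1-j} - X_{j+1}`. The vector `v` and the columns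
`X_1, …, X_{d-1}` are therefore free coordinates on the space of such triples `(X, Y, v)`, which has
dimension `d + d(d-1)n²`. The block pencil depends linearly on the two triples, and it is injective
on them because `v` is recovered from `X_0 = v ⊗ A_d` when `A_d ≠ 0`. -/

open Polynomial in
theorem eq_zero_of_forall_sum_pow_smul_eq_zero {K V : Type*} [Field K] [Infinite K]
    [AddCommGroup V] [Module K V] {N : ℕ} (c : Fin N → V)
    (h : ∀ x : K, ∑ t : Fin N, x ^ (t : ℕ) • c t = 0) : c = 0 := by
  funext t
  refine (Module.forall_dual_apply_eq_zero_iff K (c t)).mp fun φ => ?_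
  have hp : ∑ s : Fin N, C (φ (c s)) * X ^ (s : ℕ) = 0 := by
    refine Polynomial.funext fun x => ?_
    have hφ := congrArg φ (h x)
    simp only [map_sum, map_smul, smul_eq_mul, map_zero] at hφ
    simp only [eval_finsetSum, eval_mul, eval_C, eval_pow, eval_X, eval_zero, ← hφ]
    exact Finset.sum_congr rfl fun s _ => mul_comm _ _
  simpa [finsetSum_coeff, coeff_C_mul, coeff_X_pow, Fin.val_inj] using congrArg (coeff · t) hp

theorem sum_pow_smul_telescope {R V : Type*} [CommRing R] [AddCommGroup V] [Module R V] {e : ℕ}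
    (a : Fin (e + 2) → V) (w : Fin e → V) (x : R) :
    ∑ j : Fin (e + 1), x ^ (e - j : ℕ) •
        (x • (Fin.cons (a (Fin.last _)) w : Fin (e + 1) → V) j
          + (a (Fin.rev j).castSucc - (Fin.snoc w 0 : Fin (e + 1) → V) j))
      = ∑ t : Fin (e + 2), x ^ (t : ℕ) • a t := by
  have hshift :
      ∑ j : Fin (e + 1), x ^ (e - j : ℕ) • x • (Fin.cons (a (Fin.last _)) w : Fin (e + 1) → V) j
        = x ^ (e + 1) • a (Fin.last _) + ∑ i : Fin e, x ^ (e - i : ℕ) • w i := by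
    rw [Fin.sum_univ_succ]
    congr 1
    · simp [smul_smul, pow_succ]
    · refine Finset.sum_congr rfl fun i _ => ?_
      rw [Fin.cons_succ, smul_smul, ← pow_succ]
      congr 2
      rw [Fin.val_succ]
      omega
  have hsnoc : ∑ j : Fin (e + 1), x ^ (e - j : ℕ) • (Fin.snoc w 0 : Fin (e + 1) → V) j
      = ∑ i : Fin e, x ^ (e - i : ℕ) • w i := by
    simp [Fin.sum_univ_castSucc]
  have hrev : ∑ j : Fin (e + 1), x ^ (e - j : ℕ) • a (Fin.rev j).castSucc
      = ∑ t : Fin (e + 1), x ^ (t : ℕ) • a t.castSucc :=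
    Fintype.sum_equiv Fin.revPerm _ _ fun j => by simp [Fin.val_rev]
  simp only [smul_add, smul_sub, Finset.sum_add_distrib, Finset.sum_sub_distrib, hshift, hsnoc,
    hrev]
  rw [Fin.sum_univ_castSucc (fun t => x ^ (t : ℕ) • a t)]
  simp only [Fin.val_last]
  abel

theorem eq_zero_of_forall_sum_pow_smul_cons_eq_zero {K V : Type*} [Field K] [Infinite K]
    [AddCommGroup V] [Module K V] {e : ℕ} (x₀ : V) (y : Fin (e + 1) → V)
    (h : ∀ x : K, ∑ j : Fin (e + 1),
      x ^ (e - j : ℕ) • (x • (Fin.cons x₀ 0 : Fin (e + 1) → V) j + y j) = 0) :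
    x₀ = 0 ∧ y = 0 := by
  -- the left side is the polynomial with coefficients `y (rev 0), …, y (rev e), x₀`
  set a : Fin (e + 2) → V := Fin.lastCases x₀ fun t => y (Fin.rev t)
  have hsnoc : (Fin.snoc (0 : Fin e → V) 0 : Fin (e + 1) → V) = 0 :=
    funext fun j => by cases j using Fin.lastCases <;> simp
  have ha : a = 0 := eq_zero_of_forall_sum_pow_smul_eq_zero (K := K) a fun x => by
    rw [← sum_pow_smul_telescope a 0 x]
    simpa [a, hsnoc] using h x
  refine ⟨by simpa [a] using congrFun ha (Fin.last _), funext fun j => ?_⟩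
  simpa [a] using congrFun ha (Fin.rev j).castSucc

section BlockColumns

variable {ι : Type*} {d n : ℕ}

def blockCols : Matrix ι (Fin d × Fin n) ℂ ≃ₗ[ℂ] (Fin d → Matrix ι (Fin n) ℂ) where
  toFun M j i c := M i (j, c)
  invFun f i jc := f jc.1 i jc.2
  map_add' _ _ := rfl
  map_smul' _ _ := rfl
  left_inv _ := rfl
  right_inv _ := rfl

@[simp]
theorem blockCols_apply (M : Matrix ι (Fin d × Fin n) ℂ) (j : Fin d) (i : ι) (c : Fin n) :
    blockCols M j i c = M i (j, c) := rfl

@[simp]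
theorem blockCols_symm_apply (f : Fin d → Matrix ι (Fin n) ℂ) (i : ι) (jc : Fin d × Fin n) :
    blockCols.symm f i jc = f jc.1 i jc.2 := rfl

theorem mul_vKron_one [Fintype ι] (M : Matrix ι (Fin d × Fin n) ℂ) (u : Fin d → ℂ) :
    M * vKron u (1 : Matrix (Fin n) (Fin n) ℂ) = ∑ j, u j • blockCols M j := by
  ext i c
  simp [Matrix.mul_apply, Fintype.sum_prod_type, vKron, Matrix.one_apply, Matrix.sum_apply,
    mul_comm]

end BlockColumns

section Kronecker

variable {a : ℕ} {α β : Type*}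

theorem vKron_add_left (v v' : Fin a → ℂ) (M : Matrix α β ℂ) :
    vKron (v + v') M = vKron v M + vKron v' M := by
  ext i j
  simp [vKron, add_mul]

theorem vKron_smul_left (c : ℂ) (v : Fin a → ℂ) (M : Matrix α β ℂ) :
    vKron (c • v) M = c • vKron v M := by
  ext i j
  simp [vKron, mul_assoc]

theorem vKron_left_injective {M : Matrix α β ℂ} (hM : M ≠ 0) :
    Function.Injective fun v : Fin a → ℂ => vKron v M := by
  obtain ⟨i, j, hij⟩ : ∃ i j, M i j ≠ 0 := by
    by_contra! h
    exact hM (Matrix.ext h)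
  intro v v' h
  funext t
  exact mul_right_cancel₀ hij (congrFun (congrFun h (t, i)) j)

theorem oKron_add_left {b : ℕ} (v v' : Fin a → ℂ) (w : Fin b → ℂ) (M : Matrix α β ℂ) :
    oKron (v + v') w M = oKron v w M + oKron v' w M := by
  ext i j
  simp [oKron, add_mul]

theorem oKron_smul_left {b : ℕ} (c : ℂ) (v : Fin a → ℂ) (w : Fin b → ℂ) (M : Matrix α β ℂ) :
    oKron (c • v) w M = c • oKron v w M := by
  ext i j
  simp [oKron, mul_assoc]

theorem vKron_polyEval {d n : ℕ} (v : Fin a → ℂ) (Pc : Fin (d + 1) → Matrix (Fin n) (Fin n) ℂ)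
    (x : ℂ) : vKron v (polyEval Pc x) = ∑ t : Fin (d + 1), x ^ (t : ℕ) • vKron v (Pc t) := by
  ext i j
  simp [vKron, polyEval, Matrix.sum_apply, Finset.mul_sum, mul_left_comm]

end Kronecker

abbrev PencilWithAnsatz (d n : ℕ) : Type :=
  Matrix (Fin d × Fin n) (Fin d × Fin n) ℂ × Matrix (Fin d × Fin n) (Fin d × Fin n) ℂ × (Fin d → ℂ)

def l1Space {d n : ℕ} (Pc : Fin (d + 1) → Matrix (Fin n) (Fin n) ℂ) :
    Submodule ℂ (PencilWithAnsatz d n) where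
  carrier := {p | InL1 Pc p.1 p.2.1 p.2.2}
  add_mem' := by
    rintro ⟨X, Y, v⟩ ⟨X', Y', v'⟩ (h : InL1 Pc X Y v) (h' : InL1 Pc X' Y' v') x
    show (x • (X + X') + (Y + Y')) * _ = vKron (v + v') _
    rw [vKron_add_left, ← h x, ← h' x, ← Matrix.add_mul]
    congr 1
    module
  zero_mem' x := by
    ext i j
    simp [vKron]
  smul_mem' := by
    rintro c ⟨X, Y, v⟩ (h : InL1 Pc X Y v) x
    show (x • c • X + c • Y) * _ = vKron (c • v) _
    rw [vKron_smul_left, ← h x, ← Matrix.smul_mul]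
    congr 1
    module

section L1

variable {e n : ℕ} (Pc : Fin (e + 1 + 1) → Matrix (Fin n) (Fin n) ℂ)

theorem inL1_iff_blockCols (X Y : Matrix (Fin (e + 1) × Fin n) (Fin (e + 1) × Fin n) ℂ)
    (v : Fin (e + 1) → ℂ) :
    InL1 Pc X Y v ↔ ∀ x : ℂ,
      ∑ j : Fin (e + 1), x ^ (e - j : ℕ) • (x • blockCols X j + blockCols Y j)
        = ∑ t : Fin (e + 1 + 1), x ^ (t : ℕ) • vKron v (Pc t) := by
  refine forall_congr' fun x => ?_
  rw [mul_vKron_one, vKron_polyEval]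
  simp [Lam]

def l1Param (v : Fin (e + 1) → ℂ) (W : Matrix (Fin (e + 1) × Fin n) (Fin e × Fin n) ℂ) :
    PencilWithAnsatz (e + 1) n :=
  (blockCols.symm (Fin.cons (vKron v (Pc (Fin.last _))) (blockCols W)),
   blockCols.symm fun j =>
     vKron v (Pc (Fin.rev j).castSucc) - (Fin.snoc (blockCols W) 0 : Fin (e + 1) → Matrix _ _ ℂ) j,
   v)

theorem l1Param_mem (v : Fin (e + 1) → ℂ) (W : Matrix (Fin (e + 1) × Fin n) (Fin e × Fin n) ℂ) :
    l1Param Pc v W ∈ l1Space Pc := by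
  show InL1 Pc _ _ _
  rw [inL1_iff_blockCols]
  intro x
  simpa [l1Param] using sum_pow_smul_telescope (fun t => vKron v (Pc t)) (blockCols W) x

def l1Coords : l1Space Pc →ₗ[ℂ]
    (Fin (e + 1) → ℂ) × Matrix (Fin (e + 1) × Fin n) (Fin e × Fin n) ℂ where
  toFun p := (p.1.2.2, blockCols.symm (Fin.tail (blockCols p.1.1)))
  map_add' _ _ := rfl
  map_smul' _ _ := rfl

@[simp]
theorem l1Coords_apply (p : l1Space Pc) :
    l1Coords Pc p = (p.1.2.2, blockCols.symm (Fin.tail (blockCols p.1.1))) := rfl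

theorem l1Coords_injective : Function.Injective (l1Coords Pc) := by
  refine (injective_iff_map_eq_zero _).mpr ?_
  rintro ⟨⟨X, Y, v⟩, hp⟩ h
  obtain ⟨rfl, hW⟩ : v = 0 ∧ blockCols.symm (Fin.tail (blockCols X)) = 0 := Prod.mk_eq_zero.mp h
  have htail : Fin.tail (blockCols X) = 0 := by simpa using congrArg blockCols hW
  have hX : blockCols X = Fin.cons (blockCols X 0) 0 := by
    rw [← htail, Fin.cons_self_tail]
  have hsum := (inL1_iff_blockCols Pc X Y 0).mp hp
  rw [hX] at hsum
  have hvKron : ∀ M : Matrix (Fin n) (Fin n) ℂ, vKron (0 : Fin (e + 1) → ℂ) M = 0 := fun M => by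
    ext i j
    simp [vKron]
  obtain ⟨hX0, hY⟩ := eq_zero_of_forall_sum_pow_smul_cons_eq_zero (K := ℂ)
    (blockCols X 0) (blockCols Y) fun x => by simpa [hvKron] using hsum x
  have hXz : X = 0 := blockCols.injective <| funext fun j => by
    cases j using Fin.cases
    · simpa using hX0
    · exact congrFun htail _
  have hYz : Y = 0 := blockCols.injective (by rw [hY, map_zero])
  subst hXz hYz
  rfl

theorem l1Coords_surjective : Function.Surjective (l1Coords Pc) := fun ⟨v, W⟩ =>
  ⟨⟨l1Param Pc v W, l1Param_mem Pc v W⟩, by simp [l1Param]⟩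

theorem finrank_l1Space :
    Module.finrank ℂ (l1Space Pc) = (e + 1) + (e + 1) * n * (e * n) := by
  rw [(LinearEquiv.ofBijective _ ⟨l1Coords_injective Pc, l1Coords_surjective Pc⟩).finrank_eq]
  simp [Module.finrank_matrix]

theorem InL1.blockCols_zero {X Y : Matrix (Fin (e + 1) × Fin n) (Fin (e + 1) × Fin n) ℂ}
    {v : Fin (e + 1) → ℂ} (h : InL1 Pc X Y v) : blockCols X 0 = vKron v (Pc (Fin.last _)) := by
  set W := blockCols.symm (Fin.tail (blockCols X))
  have hp : (⟨(X, Y, v), h⟩ : l1Space Pc) = ⟨l1Param Pc v W, l1Param_mem Pc v W⟩ :=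
    l1Coords_injective Pc (by simp [l1Param, W])
  have hX : X = (l1Param Pc v W).1 := congrArg (·.1.1) hp
  rw [hX]
  simp [l1Param]

theorem InL1.ansatz_unique (hP : Pc (Fin.last _) ≠ 0)
    {X Y Y' : Matrix (Fin (e + 1) × Fin n) (Fin (e + 1) × Fin n) ℂ} {v v' : Fin (e + 1) → ℂ}
    (h : InL1 Pc X Y v) (h' : InL1 Pc X Y' v') : v = v' :=
  vKron_left_injective hP (h.blockCols_zero.symm.trans h'.blockCols_zero)

end L1

section BlockPencil

variable {m k n r : ℕ}

abbrev BlockMatrix (m k n r : ℕ) : Type :=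
  Matrix ((Fin m × Fin n) ⊕ (Fin k × Fin r)) ((Fin m × Fin n) ⊕ (Fin k × Fin r)) ℂ

def blockPencil (B : Matrix (Fin n) (Fin r) ℂ) (C : Matrix (Fin r) (Fin n) ℂ) :
    PencilWithAnsatz m n × PencilWithAnsatz k r →ₗ[ℂ]
      BlockMatrix m k n r × BlockMatrix m k n r where
  toFun q := (fromBlocks q.1.1 0 0 q.2.1,
    fromBlocks q.1.2.1 (-oKron q.1.2.2 (eVec k (k - 1)) B) (oKron q.2.2.2 (eVec m (m - 1)) C)
      q.2.2.1)
  map_add' q q' := by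
    simp only [Prod.fst_add, Prod.snd_add, oKron_add_left, fromBlocks_add, Prod.mk_add_mk, neg_add,
      add_zero]
  map_smul' c q := by
    simp only [Prod.smul_fst, Prod.smul_snd, oKron_smul_left, fromBlocks_smul, Prod.smul_mk,
      smul_zero, smul_neg, RingHom.id_apply]

variable (Ac : Fin (m + 1) → Matrix (Fin n) (Fin n) ℂ) (Dc : Fin (k + 1) → Matrix (Fin r) (Fin r) ℂ)
  (B : Matrix (Fin n) (Fin r) ℂ) (C : Matrix (Fin r) (Fin n) ℂ)

def blockL1Map : l1Space Ac × l1Space Dc →ₗ[ℂ] BlockMatrix m k n r × BlockMatrix m k n r :=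
  (blockPencil B C).comp ((l1Space Ac).subtype.prodMap (l1Space Dc).subtype)

theorem coe_range_blockL1Map :
    (LinearMap.range (blockL1Map Ac Dc B C) : Set (BlockMatrix m k n r × BlockMatrix m k n r))
      = {p | ∃ v w, InBL1 Ac Dc B C p.1 p.2 v w} := by
  ext ⟨XX, YY⟩
  constructor
  · rintro ⟨⟨⟨⟨X, Y, v⟩, hXY⟩, ⟨⟨P, Q, w⟩, hPQ⟩⟩, h⟩
    obtain ⟨rfl, rfl⟩ := Prod.ext_iff.mp h
    exact ⟨v, w, X, Y, P, Q, hXY, hPQ, rfl, rfl⟩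
  · rintro ⟨v, w, X, Y, P, Q, hXY, hPQ, rfl, rfl⟩
    exact ⟨(⟨(X, Y, v), hXY⟩, ⟨(P, Q, w), hPQ⟩), rfl⟩

end BlockPencil

theorem blockL1Map_injective {e f n r : ℕ} (Ac : Fin (e + 1 + 1) → Matrix (Fin n) (Fin n) ℂ)
    (Dc : Fin (f + 1 + 1) → Matrix (Fin r) (Fin r) ℂ)
    (B : Matrix (Fin n) (Fin r) ℂ) (C : Matrix (Fin r) (Fin n) ℂ)
    (hA : Ac (Fin.last _) ≠ 0) (hD : Dc (Fin.last _) ≠ 0) :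
    Function.Injective (blockL1Map Ac Dc B C) := by
  rintro ⟨⟨⟨X, Y, v⟩, hXY⟩, ⟨⟨P, Q, w⟩, hPQ⟩⟩ ⟨⟨⟨X', Y', v'⟩, hXY'⟩, ⟨⟨P', Q', w'⟩, hPQ'⟩⟩ h
  obtain ⟨hX, -, -, hP⟩ := fromBlocks_inj.mp (congrArg Prod.fst h)
  obtain ⟨hY, -, -, hQ⟩ := fromBlocks_inj.mp (congrArg Prod.snd h)
  subst hX hY hP hQ
  obtain rfl := InL1.ansatz_unique Ac hA hXY hXY'
  obtain rfl := InL1.ansatz_unique Dc hD hPQ hPQ'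
  rfl

theorem stmt3_general {m k n r : ℕ} (hm : 1 ≤ m) (hk : 1 ≤ k)
    (Ac : Fin (m + 1) → Matrix (Fin n) (Fin n) ℂ)
    (Dc : Fin (k + 1) → Matrix (Fin r) (Fin r) ℂ)
    (B : Matrix (Fin n) (Fin r) ℂ) (C : Matrix (Fin r) (Fin n) ℂ)
    (hA : Ac (Fin.last m) ≠ 0) (hD : Dc (Fin.last k) ≠ 0) :
    ∃ S : Submodule ℂ
        (Matrix ((Fin m × Fin n) ⊕ (Fin k × Fin r)) ((Fin m × Fin n) ⊕ (Fin k × Fin r)) ℂ ×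
         Matrix ((Fin m × Fin n) ⊕ (Fin k × Fin r)) ((Fin m × Fin n) ⊕ (Fin k × Fin r)) ℂ),
      (S : Set (Matrix ((Fin m × Fin n) ⊕ (Fin k × Fin r)) ((Fin m × Fin n) ⊕ (Fin k × Fin r)) ℂ ×
          Matrix ((Fin m × Fin n) ⊕ (Fin k × Fin r)) ((Fin m × Fin n) ⊕ (Fin k × Fin r)) ℂ))
          = {p | ∃ v w, InBL1 Ac Dc B C p.1 p.2 v w} ∧
      Module.finrank ℂ S = m + m * (m - 1) * n ^ 2 + k + k * (k - 1) * r ^ 2 := by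
  obtain ⟨e, rfl⟩ := Nat.exists_eq_add_of_le' hm
  obtain ⟨f, rfl⟩ := Nat.exists_eq_add_of_le' hk
  refine ⟨LinearMap.range (blockL1Map Ac Dc B C), coe_range_blockL1Map Ac Dc B C, ?_⟩
  rw [LinearMap.finrank_range_of_inj (blockL1Map_injective Ac Dc B C hA hD),
    Module.finrank_prod, finrank_l1Space, finrank_l1Space]
  simp only [add_tsub_cancel_right]
  ring

/-- with `A_m ≠ 0` and `D_k ≠ 0`, the set of pencils `(𝕏, 𝕐)` belonging to
`𝕃₁(G)` (for some ansatz vectors) is a `ℂ`-subspace of dimension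
`m + m(m−1)n² + k + k(k−1)r²`. -/
theorem stmt3 {m k n r : ℕ} (hm : 1 ≤ m) (hk : 1 ≤ k) (hn : 1 ≤ n) (hr : 1 ≤ r)
    (Ac : Fin (m + 1) → Matrix (Fin n) (Fin n) ℂ)
    (Dc : Fin (k + 1) → Matrix (Fin r) (Fin r) ℂ)
    (B : Matrix (Fin n) (Fin r) ℂ) (C : Matrix (Fin r) (Fin n) ℂ)
    (hA : Ac (Fin.last m) ≠ 0) (hD : Dc (Fin.last k) ≠ 0) :
    ∃ S : Submodule ℂ
        (Matrix ((Fin m × Fin n) ⊕ (Fin k × Fin r)) ((Fin m × Fin n) ⊕ (Fin k × Fin r)) ℂ ×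
         Matrix ((Fin m × Fin n) ⊕ (Fin k × Fin r)) ((Fin m × Fin n) ⊕ (Fin k × Fin r)) ℂ),
      (S : Set (Matrix ((Fin m × Fin n) ⊕ (Fin k × Fin r)) ((Fin m × Fin n) ⊕ (Fin k × Fin r)) ℂ ×
          Matrix ((Fin m × Fin n) ⊕ (Fin k × Fin r)) ((Fin m × Fin n) ⊕ (Fin k × Fin r)) ℂ))
          = {p | ∃ v w, InBL1 Ac Dc B C p.1 p.2 v w} ∧
      Module.finrank ℂ S = m + m * (m - 1) * n ^ 2 + k + k * (k - 1) * r ^ 2 :=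
  stmt3_general hm hk Ac Dc B C hA hD
end
end

section
/- Suppose the pencil 𝕃(λ) is in 𝕃₁(G) with ansatz vectors (v, w). Then for every λ ∈ ℂ with det A(λ) ≠ 0, 𝕃(λ) · [Λ_{m-1}(λ) ⊗ (A(λ)^{-1} B); Λ_{k-1}(λ) ⊗ I_r] = [0; w ⊗ G(λ)], where the middle factor is the (mn+kr)×r matrix obtained by stacking the mn×r block Λ_{m-1}(λ) ⊗ (A(λ)^{-1} B) above the kr×r block Λ_{k-1}(λ) ⊗ I_r, and the right-hand side stacks the zero mn×r matrix above w ⊗ G(λ). -/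
/-! The ansatz identity of `L` turns the top-left product into `v ⊗ A(λ)A(λ)⁻¹B = v ⊗ B`, which the
coupling block `-v e_kᵀ ⊗ B` cancels since `e_kᵀ Λ_{k-1}(λ) = 1` picks out the entry `λ⁰`. In the
bottom row `e_mᵀ Λ_{m-1}(λ) = 1` likewise leaves `w ⊗ C A(λ)⁻¹ B`, and the ansatz identity of `K`
adds `w ⊗ D(λ)`. -/

open Matrix Finset

noncomputable section

lemma vKron_mul {a : ℕ} {α β γ : Type*} [Fintype β] (v : Fin a → ℂ)
    (M : Matrix α β ℂ) (N : Matrix β γ ℂ) :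
    vKron v M * N = vKron v (M * N) := by
  ext i j
  simp [vKron, Matrix.mul_apply, Finset.mul_sum, mul_assoc]

lemma vKron_add {a : ℕ} {α β : Type*} (v : Fin a → ℂ) (M N : Matrix α β ℂ) :
    vKron v M + vKron v N = vKron v (M + N) := by
  ext i j
  simp [vKron, mul_add]

lemma oKron_mul_vKron {a b : ℕ} {α β γ : Type*} [Fintype β]
    (v : Fin a → ℂ) (w u : Fin b → ℂ) (M : Matrix α β ℂ) (N : Matrix β γ ℂ) :
    oKron v w M * vKron u N = (w ⬝ᵥ u) • vKron v (M * N) := by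
  ext i j
  simp only [oKron, vKron, dotProduct, Matrix.mul_apply, Matrix.smul_apply, smul_eq_mul,
    Fintype.sum_prod_type, Finset.sum_mul, Finset.mul_sum]
  rw [Finset.sum_comm]
  exact Finset.sum_congr rfl fun _ _ => Finset.sum_congr rfl fun _ _ => by ring

lemma eVec_last_dotProduct_Lam {a : ℕ} (ha : 1 ≤ a) (lam : ℂ) :
    eVec a (a - 1) ⬝ᵥ Lam a lam = 1 := by
  have hlast : eVec a (a - 1) = Pi.single (⟨a - 1, by omega⟩ : Fin a) 1 := by
    ext i
    simp only [eVec, Pi.single_apply, Fin.ext_iff]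
  simp [hlast, Lam]

lemma InL1.pencil_mul_vKron_Lam {d n : ℕ} {γ : Type*}
    {Pc : Fin (d + 1) → Matrix (Fin n) (Fin n) ℂ}
    {X Y : Matrix (Fin d × Fin n) (Fin d × Fin n) ℂ} {v : Fin d → ℂ}
    (h : InL1 Pc X Y v) (lam : ℂ) (N : Matrix (Fin n) γ ℂ) :
    (lam • X + Y) * vKron (Lam d lam) N = vKron v (polyEval Pc lam * N) := by
  rw [← vKron_mul, ← h lam, Matrix.mul_assoc, vKron_mul, Matrix.one_mul]

theorem stmt6_general {m k n r : ℕ} (hm : 1 ≤ m) (hk : 1 ≤ k)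
    (Ac : Fin (m + 1) → Matrix (Fin n) (Fin n) ℂ)
    (Dc : Fin (k + 1) → Matrix (Fin r) (Fin r) ℂ)
    (B : Matrix (Fin n) (Fin r) ℂ) (C : Matrix (Fin r) (Fin n) ℂ)
    (XX YY : Matrix ((Fin m × Fin n) ⊕ (Fin k × Fin r)) ((Fin m × Fin n) ⊕ (Fin k × Fin r)) ℂ)
    (v : Fin m → ℂ) (w : Fin k → ℂ)
    (hL : InBL1 Ac Dc B C XX YY v w) :
    ∀ lam : ℂ, (polyEval Ac lam).det ≠ 0 →
      (lam • XX + YY) *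
          Matrix.fromRows (vKron (Lam m lam) ((polyEval Ac lam)⁻¹ * B))
            (vKron (Lam k lam) (1 : Matrix (Fin r) (Fin r) ℂ))
        = Matrix.fromRows 0 (vKron w (Gmat Ac Dc B C lam)) := by
  intro lam hdet
  obtain ⟨X, Y, P, Q, hA, hD, rfl, rfl⟩ := hL
  have hAunit : IsUnit (polyEval Ac lam).det := isUnit_iff_ne_zero.mpr hdet
  rw [Matrix.fromBlocks_smul, Matrix.fromBlocks_add, Matrix.fromBlocks_mul_fromRows]
  simp only [smul_zero, zero_add]
  congr 1
  · rw [hA.pencil_mul_vKron_Lam, Matrix.mul_nonsing_inv_cancel_left _ _ hAunit, Matrix.neg_mul,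
      oKron_mul_vKron, eVec_last_dotProduct_Lam hk, one_smul, Matrix.mul_one, add_neg_cancel]
  · rw [oKron_mul_vKron, eVec_last_dotProduct_Lam hm, one_smul, hD.pencil_mul_vKron_Lam,
      Matrix.mul_one, vKron_add, Gmat, Matrix.mul_assoc, add_comm]

/-- if `𝕃(λ) = λ𝕏 + 𝕐` is in `𝕃₁(G)` with ansatz vectors `(v, w)`, then for every
`λ` which is not a pole (i.e. `det A(λ) ≠ 0`),
`𝕃(λ) ⬝ [Λ_{m-1}(λ) ⊗ (A(λ)⁻¹ B); Λ_{k-1}(λ) ⊗ I_r] = [0; w ⊗ G(λ)]`. -/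
theorem stmt6 {m k n r : ℕ} (hm : 1 ≤ m) (hk : 1 ≤ k) (hn : 1 ≤ n) (hr : 1 ≤ r)
    (Ac : Fin (m + 1) → Matrix (Fin n) (Fin n) ℂ)
    (Dc : Fin (k + 1) → Matrix (Fin r) (Fin r) ℂ)
    (B : Matrix (Fin n) (Fin r) ℂ) (C : Matrix (Fin r) (Fin n) ℂ)
    (XX YY : Matrix ((Fin m × Fin n) ⊕ (Fin k × Fin r)) ((Fin m × Fin n) ⊕ (Fin k × Fin r)) ℂ)
    (v : Fin m → ℂ) (w : Fin k → ℂ)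
    (hL : InBL1 Ac Dc B C XX YY v w) :
    ∀ lam : ℂ, (polyEval Ac lam).det ≠ 0 →
      (lam • XX + YY) *
          Matrix.fromRows (vKron (Lam m lam) ((polyEval Ac lam)⁻¹ * B))
            (vKron (Lam k lam) (1 : Matrix (Fin r) (Fin r) ℂ))
        = Matrix.fromRows 0 (vKron w (Gmat Ac Dc B C lam)) :=
  stmt6_general hm hk Ac Dc B C XX YY v w hL
end
end

section
/- Let λ ∈ ℂ with det A(λ) ≠ 0 and let 𝕃 be a pencil in 𝕃₂(G) with ansatz vectors (s, z), where z ≠ 0. For y ∈ ℂ^r define u(y) = [conj(Λ_{m-1}(λ)) ⊗ ((−C A(λ)^{-1})^* y); conj(Λ_{k-1}(λ)) ⊗ y] ∈ ℂ^{mn+kr}, where conj denotes entrywise complex conjugation and * the conjugate transpose. Then: (i) y^* G(λ) = 0 if and only if u(y)^* 𝕃(λ) = 0; (ii) the map y ↦ u(y) is injective and linear over the conjugation (in particular u(y) ≠ 0 whenever y ≠ 0). -/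
open Matrix Finset

noncomputable section

/-- the vector `u(y) = [conj(Λ_{m-1}(λ)) ⊗ ((−C A(λ)⁻¹)^* y); conj(Λ_{k-1}(λ)) ⊗ y]`. -/
def uvec (m k : ℕ) {n r : ℕ} (Ac : Fin (m + 1) → Matrix (Fin n) (Fin n) ℂ)
    (C : Matrix (Fin r) (Fin n) ℂ) (lam : ℂ) (y : Fin r → ℂ) :
    ((Fin m × Fin n) ⊕ (Fin k × Fin r)) → ℂ :=
  Sum.elim
    (fun ap => (starRingEnd ℂ) (Lam m lam ap.1) * ((-(C * (polyEval Ac lam)⁻¹))ᴴ *ᵥ y) ap.2)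
    (fun cs => (starRingEnd ℂ) (Lam k lam cs.1) * y cs.2)

/-!
For row vectors `q ∈ ℂⁿ`, `w ∈ ℂʳ` the two `L₂` ansatz equations, together with the fact that
the last entry of `Λ` is `1`, give
`[Λ_{m-1}ᵀ ⊗ q, Λ_{k-1}ᵀ ⊗ w] 𝕃(λ) = [sᵀ ⊗ (q A(λ) + w C), zᵀ ⊗ (w D(λ) - q B)]`.
For `u(y)^*` we have `w = y^*` and `q = -y^* C A(λ)⁻¹`, so the first block vanishes and the
second is `zᵀ ⊗ y^* G(λ)`, which is zero iff `y^* G(λ)` is, since `z ≠ 0`. The last block entry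
of the second half of `u(y)` is `y` itself, whence injectivity.
-/

def kronVec {a : ℕ} {α : Type*} (v : Fin a → ℂ) (q : α → ℂ) : Fin a × α → ℂ :=
  fun i => v i.1 * q i.2

section Kronecker

variable {a b : ℕ} {α β : Type*} [Fintype α]

theorem kronVec_vecMul [DecidableEq α] (v : Fin a → ℂ) (q : α → ℂ)
    (M : Matrix (Fin a × α) β ℂ) :
    -- without the ascription `*` elaborates to the `CStarMatrix` product, unlike in `InL2`
    kronVec v q ᵥ* M = q ᵥ* ((rKron v 1 : Matrix α (Fin a × α) ℂ) * M) := by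
  ext t
  simp only [vecMul, dotProduct, mul_apply, rKron, one_apply, kronVec, Fintype.sum_prod_type,
    Finset.mul_sum, mul_ite, mul_one, mul_zero, ite_mul, zero_mul, Finset.sum_ite_eq,
    Finset.mem_univ, if_true]
  rw [Finset.sum_comm]
  exact Finset.sum_congr rfl fun _ _ => Finset.sum_congr rfl fun _ _ => by ring

theorem vecMul_rKron (q : α → ℂ) (s : Fin a → ℂ) (N : Matrix α β ℂ) :
    q ᵥ* rKron s N = kronVec s (q ᵥ* N) := by
  ext ⟨i, t⟩
  simp only [vecMul, dotProduct, rKron, kronVec, Finset.mul_sum]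
  exact Finset.sum_congr rfl fun _ _ => by ring

theorem kronVec_vecMul_oKron (v e : Fin a → ℂ) (w : Fin b → ℂ) (q : α → ℂ)
    (M : Matrix α β ℂ) : kronVec v q ᵥ* oKron e w M = kronVec w ((v ⬝ᵥ e) • (q ᵥ* M)) := by
  ext ⟨j, t⟩
  simp only [vecMul, dotProduct, oKron, kronVec, Fintype.sum_prod_type, Pi.smul_apply,
    smul_eq_mul, Finset.sum_mul, Finset.mul_sum]
  rw [Finset.sum_comm]
  exact Finset.sum_congr rfl fun _ _ => Finset.sum_congr rfl fun _ _ => by ring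

end Kronecker

theorem kronVec_eq_zero_iff {a : ℕ} {α : Type*} {v : Fin a → ℂ} (hv : v ≠ 0) {q : α → ℂ} :
    kronVec v q = 0 ↔ q = 0 := by
  obtain ⟨i, hi⟩ := Function.ne_iff.mp hv
  refine ⟨fun h => funext fun t => ?_, fun h => funext fun _ => by simp [h, kronVec]⟩
  exact (mul_eq_zero.mp (congrFun h (i, t))).resolve_left hi

theorem Lam_last {a : ℕ} (ha : 1 ≤ a) (lam : ℂ) : Lam a lam ⟨a - 1, by omega⟩ = 1 := by
  simp [Lam]

theorem Lam_dotProduct_eVec_last {a : ℕ} (ha : 1 ≤ a) (lam : ℂ) :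
    Lam a lam ⬝ᵥ eVec a (a - 1) = 1 := by
  rw [dotProduct, Finset.sum_eq_single (⟨a - 1, by omega⟩ : Fin a)]
  · simp [eVec, Lam_last ha]
  · intro i _ hi
    simp [eVec, Fin.ext_iff.not.mp hi]
  · simp

theorem InL2.kronVec_Lam_vecMul {d n : ℕ} {Pc : Fin (d + 1) → Matrix (Fin n) (Fin n) ℂ}
    {X Y : Matrix (Fin d × Fin n) (Fin d × Fin n) ℂ} {s : Fin d → ℂ} (h : InL2 Pc X Y s)
    (lam : ℂ) (q : Fin n → ℂ) :
    kronVec (Lam d lam) q ᵥ* (lam • X + Y) = kronVec s (q ᵥ* polyEval Pc lam) := by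
  rw [kronVec_vecMul, h lam, vecMul_rKron]

section Pencil

variable {m k n r : ℕ} {Ac : Fin (m + 1) → Matrix (Fin n) (Fin n) ℂ}
  {Dc : Fin (k + 1) → Matrix (Fin r) (Fin r) ℂ} {B : Matrix (Fin n) (Fin r) ℂ}
  {C : Matrix (Fin r) (Fin n) ℂ}

theorem InBL2.kronVec_Lam_vecMul (hm : 1 ≤ m) (hk : 1 ≤ k)
    {XX YY : Matrix ((Fin m × Fin n) ⊕ (Fin k × Fin r)) ((Fin m × Fin n) ⊕ (Fin k × Fin r)) ℂ}
    {s : Fin m → ℂ} {z : Fin k → ℂ} (h : InBL2 Ac Dc B C XX YY s z) (lam : ℂ)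
    (q : Fin n → ℂ) (w : Fin r → ℂ) :
    Sum.elim (kronVec (Lam m lam) q) (kronVec (Lam k lam) w) ᵥ* (lam • XX + YY) =
      Sum.elim (kronVec s (q ᵥ* polyEval Ac lam + w ᵥ* C))
        (kronVec z (w ᵥ* polyEval Dc lam - q ᵥ* B)) := by
  obtain ⟨X, Y, P, Q, hX, hP, rfl, rfl⟩ := h
  simp only [fromBlocks_smul, fromBlocks_add, smul_zero, zero_add, vecMul_fromBlocks,
    Sum.elim_comp_inl, Sum.elim_comp_inr]
  rw [hX.kronVec_Lam_vecMul, hP.kronVec_Lam_vecMul, vecMul_neg, kronVec_vecMul_oKron,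
    kronVec_vecMul_oKron, Lam_dotProduct_eVec_last hm, Lam_dotProduct_eVec_last hk]
  ext (⟨i, t⟩ | ⟨i, t⟩) <;> simp only [one_smul, Sum.elim_inl, Sum.elim_inr, Pi.add_apply,
    Pi.neg_apply, Pi.sub_apply, kronVec] <;> ring

theorem star_uvec (lam : ℂ) (y : Fin r → ℂ) :
    star (uvec m k Ac C lam y) =
      Sum.elim (kronVec (Lam m lam) (-(star y ᵥ* (C * (polyEval Ac lam)⁻¹))))
        (kronVec (Lam k lam) (star y)) := by
  ext (⟨i, t⟩ | ⟨i, t⟩)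
  · have hstar := congrFun (star_mulVec (-(C * (polyEval Ac lam)⁻¹))ᴴ y) t
    rw [conjTranspose_conjTranspose, Pi.star_apply, vecMul_neg] at hstar
    simp only [uvec, kronVec, Pi.star_apply, Sum.elim_inl, star_mul', hstar, Complex.star_def,
      Complex.conj_conj]
  · simp [uvec, kronVec]

theorem InBL2.star_uvec_vecMul (hm : 1 ≤ m) (hk : 1 ≤ k) {lam : ℂ}
    (hdet : (polyEval Ac lam).det ≠ 0)
    {XX YY : Matrix ((Fin m × Fin n) ⊕ (Fin k × Fin r)) ((Fin m × Fin n) ⊕ (Fin k × Fin r)) ℂ}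
    {s : Fin m → ℂ} {z : Fin k → ℂ} (h : InBL2 Ac Dc B C XX YY s z) (y : Fin r → ℂ) :
    star (uvec m k Ac C lam y) ᵥ* (lam • XX + YY) =
      Sum.elim (0 : Fin m × Fin n → ℂ) (kronVec z (star y ᵥ* Gmat Ac Dc B C lam)) := by
  have hinv : (polyEval Ac lam)⁻¹ * polyEval Ac lam = 1 :=
    nonsing_inv_mul _ (isUnit_iff_ne_zero.mpr hdet)
  rw [star_uvec, h.kronVec_Lam_vecMul hm hk, neg_vecMul, neg_vecMul, vecMul_vecMul,
    vecMul_vecMul, Matrix.mul_assoc, hinv, Matrix.mul_one, neg_add_cancel, sub_neg_eq_add,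
    Gmat, vecMul_add]
  ext (⟨i, t⟩ | ⟨i, t⟩) <;> simp [kronVec]

theorem uvec_inr_last (hk : 1 ≤ k) (lam : ℂ) (y : Fin r → ℂ) (j : Fin r) :
    uvec m k Ac C lam y (Sum.inr (⟨k - 1, by omega⟩, j)) = y j := by
  simp [uvec, Lam_last hk]

theorem uvec_injective (hk : 1 ≤ k) (lam : ℂ) : Function.Injective (uvec m k Ac C lam) :=
  fun y y' h => funext fun j => by
    simpa only [uvec_inr_last hk] using congrFun h (Sum.inr (⟨k - 1, by omega⟩, j))

theorem uvec_zero (lam : ℂ) : uvec m k Ac C lam (0 : Fin r → ℂ) = 0 := by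
  ext (_ | _) <;> simp [uvec]

theorem uvec_smul_add (lam a : ℂ) (y y' : Fin r → ℂ) :
    uvec m k Ac C lam (a • y + y') = a • uvec m k Ac C lam y + uvec m k Ac C lam y' := by
  ext (⟨i, t⟩ | ⟨i, t⟩)
  · simp only [uvec, Sum.elim_inl, mulVec_add, mulVec_smul, Pi.add_apply, Pi.smul_apply,
      smul_eq_mul]
    ring
  · simp only [uvec, Sum.elim_inr, Pi.add_apply, Pi.smul_apply, smul_eq_mul]
    ring

end Pencil

theorem stmt11_general {m k n r : ℕ} (hm : 1 ≤ m) (hk : 1 ≤ k)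
    (Ac : Fin (m + 1) → Matrix (Fin n) (Fin n) ℂ)
    (Dc : Fin (k + 1) → Matrix (Fin r) (Fin r) ℂ)
    (B : Matrix (Fin n) (Fin r) ℂ) (C : Matrix (Fin r) (Fin n) ℂ)
    (lam : ℂ) (hdet : (polyEval Ac lam).det ≠ 0)
    (XX YY : Matrix ((Fin m × Fin n) ⊕ (Fin k × Fin r)) ((Fin m × Fin n) ⊕ (Fin k × Fin r)) ℂ)
    (s : Fin m → ℂ) (z : Fin k → ℂ) (hz : z ≠ 0)
    (hL : InBL2 Ac Dc B C XX YY s z) :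
    (∀ y : Fin r → ℂ,
        star y ᵥ* Gmat Ac Dc B C lam = 0 ↔
          star (uvec m k Ac C lam y) ᵥ* (lam • XX + YY) = 0) ∧
    (∀ (a : ℂ) (y y' : Fin r → ℂ),
        uvec m k Ac C lam (a • y + y') = a • uvec m k Ac C lam y + uvec m k Ac C lam y') ∧
    (∀ y y' : Fin r → ℂ, uvec m k Ac C lam y = uvec m k Ac C lam y' → y = y') ∧
    (∀ y : Fin r → ℂ, y ≠ 0 → uvec m k Ac C lam y ≠ 0) := by
  refine ⟨fun y => ?_, uvec_smul_add lam, fun _ _ h => uvec_injective hk lam h,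
    fun y hy h0 => hy (uvec_injective hk lam (h0.trans (uvec_zero lam).symm))⟩
  rw [hL.star_uvec_vecMul hm hk hdet, ← Sum.elim_zero_zero, Sum.elim_eq_iff]
  simp [kronVec_eq_zero_iff hz]

/-- left-eigenvector recovery for pencils in `𝕃₂(G)`: for `λ` with
`det A(λ) ≠ 0` and `𝕃 ∈ 𝕃₂(G)` with ansatz vectors `(s, z)`, `z ≠ 0`:
(i) `y^* G(λ) = 0 ↔ u(y)^* 𝕃(λ) = 0`; (ii) `y ↦ u(y)` is linear and injective, and in
particular `u(y) ≠ 0` whenever `y ≠ 0`. -/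
theorem stmt11 {m k n r : ℕ} (hm : 1 ≤ m) (hk : 1 ≤ k) (hn : 1 ≤ n) (hr : 1 ≤ r)
    (Ac : Fin (m + 1) → Matrix (Fin n) (Fin n) ℂ)
    (Dc : Fin (k + 1) → Matrix (Fin r) (Fin r) ℂ)
    (B : Matrix (Fin n) (Fin r) ℂ) (C : Matrix (Fin r) (Fin n) ℂ)
    (lam : ℂ) (hdet : (polyEval Ac lam).det ≠ 0)
    (XX YY : Matrix ((Fin m × Fin n) ⊕ (Fin k × Fin r)) ((Fin m × Fin n) ⊕ (Fin k × Fin r)) ℂ)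
    (s : Fin m → ℂ) (z : Fin k → ℂ) (hz : z ≠ 0)
    (hL : InBL2 Ac Dc B C XX YY s z) :
    (∀ y : Fin r → ℂ,
        star y ᵥ* Gmat Ac Dc B C lam = 0 ↔
          star (uvec m k Ac C lam y) ᵥ* (lam • XX + YY) = 0) ∧
    (∀ (a : ℂ) (y y' : Fin r → ℂ),
        uvec m k Ac C lam (a • y + y') = a • uvec m k Ac C lam y + uvec m k Ac C lam y') ∧
    (∀ y y' : Fin r → ℂ, uvec m k Ac C lam y = uvec m k Ac C lam y' → y = y') ∧
    (∀ y : Fin r → ℂ, y ≠ 0 → uvec m k Ac C lam y ≠ 0) :=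
  stmt11_general hm hk Ac Dc B C lam hdet XX YY s z hz hL
end
end
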